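/- Let Γ be the semidirect product (ℚ³ ⊕ ℚ³) ⋊ SL(3,ℚ). Then Γ has no non-trivial finite dimensional unitary representations: for every n ∈ ℕ, every group homomorphism π from Γ to the unitary group U(n) of n×n complex matrices satisfies π(g) = 1 for all g ∈ Γ. -/

import Mathlib

open Matrix

/-- The additive group `R³ ⊕ R³`. -/
abbrev VV (R : Type*) := (Fin 3 → R) × (Fin 3 → R)

/-- Transpose, as a map on `SL(3,R)`. -/
def transposeSL {R : Type*} [CommRing R] (A : Matrix.SpecialLinearGroup (Fin 3) R) :
    Matrix.SpecialLinearGroup (Fin 3) R :=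
  ⟨A.val.transpose, by rw [Matrix.det_transpose]; exact A.prop⟩

/-- The group homomorphism `A ↦ (Aᵀ)⁻¹` on `SL(3,R)`. -/
def dualHom {R : Type*} [CommRing R] :
    Matrix.SpecialLinearGroup (Fin 3) R →* Matrix.SpecialLinearGroup (Fin 3) R where
  toFun A := (transposeSL A)⁻¹
  map_one' := by
    simp [transposeSL]
    exact inv_one (G := Matrix.SpecialLinearGroup (Fin 3) R)
  map_mul' A B := by
    show (transposeSL (A * B))⁻¹ = (transposeSL A)⁻¹ * (transposeSL B)⁻¹
    have h : transposeSL (A * B) = transposeSL B * transposeSL A :=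
      Subtype.ext (by simp [transposeSL, Matrix.transpose_mul]; rfl)
    rw [h, _root_.mul_inv_rev]

/-- The multiplicative group structure on `AddAut A` (as in older Mathlib, where
`AddAut A` was a multiplicative group). -/
instance addAutGroup (A : Type*) [Add A] : Group (AddAut A) where
  mul g h := AddEquiv.trans h g
  one := AddEquiv.refl _
  inv := AddEquiv.symm
  mul_assoc _ _ _ := rfl
  one_mul _ := rfl
  mul_one _ := rfl
  inv_mul_cancel := AddEquiv.self_trans_symm

/-- Linear automorphisms as additive automorphisms, as a group homomorphism. -/
def linToAddAut {R : Type*} [CommRing R] :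
    ((Fin 3 → R) ≃ₗ[R] (Fin 3 → R)) →* AddAut (Fin 3 → R) where
  toFun e := e.toAddEquiv
  map_one' := rfl
  map_mul' _ _ := rfl

/-- Pairs of additive automorphisms give additive automorphisms of the product. -/
def addAutProd {R : Type*} [CommRing R] :
    AddAut (Fin 3 → R) × AddAut (Fin 3 → R) →* AddAut (VV R) where
  toFun p := AddEquiv.prodCongr p.1 p.2
  map_one' := rfl
  map_mul' _ _ := rfl

/-- The action of `SL(3,R)` on `R³ ⊕ R³` given by `A · (x,y) = (Ax, (Aᵀ)⁻¹y)`,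
as a homomorphism into additive automorphisms. -/
noncomputable def sl3Act {R : Type*} [CommRing R] :
    Matrix.SpecialLinearGroup (Fin 3) R →* AddAut (VV R) :=
  addAutProd.comp
    (((linToAddAut.comp Matrix.SpecialLinearGroup.toLin')).prod
      ((linToAddAut.comp Matrix.SpecialLinearGroup.toLin').comp dualHom))

/-- Additive automorphisms as multiplicative automorphisms of `Multiplicative`. -/
def addAutToMulAut {A : Type*} [AddGroup A] : AddAut A →* MulAut (Multiplicative A) where
  toFun e := AddEquiv.toMultiplicative e
  map_one' := rfl
  map_mul' _ _ := rfl

/-- The action of `SL(3,R)` on `Multiplicative (R³ ⊕ R³)`. -/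
noncomputable def sl3ActM (R : Type*) [CommRing R] :
    Matrix.SpecialLinearGroup (Fin 3) R →* MulAut (Multiplicative (VV R)) :=
  addAutToMulAut.comp sl3Act

/-- The group `Γ_R = (R³ ⊕ R³) ⋊ SL(3,R)`. -/
abbrev GammaR (R : Type*) [CommRing R] :=
  SemidirectProduct (Multiplicative (VV R)) (Matrix.SpecialLinearGroup (Fin 3) R) (sl3ActM R)

/-- Coordinatewise integer casting `ℤ³ → ℚ³` as an additive homomorphism. -/
def intCast3 : (Fin 3 → ℤ) →+ (Fin 3 → ℚ) := (Int.castAddHom ℚ).compLeft (Fin 3)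

/-- The inclusion `ℤ³ ⊕ ℤ³ → ℚ³ ⊕ ℚ³`. -/
def intVec : VV ℤ →+ VV ℚ := intCast3.prodMap intCast3

/-- The subgroup `Λ = ℤ³ ⊕ ℤ³` of `Γ = (ℚ³ ⊕ ℚ³) ⋊ SL(3,ℚ)`. -/
noncomputable def LambdaSub : Subgroup (GammaR ℚ) :=
  (AddSubgroup.toSubgroup intVec.range).map SemidirectProduct.inl

/-- The dot product on `R³`. -/
def dotR {R : Type*} [CommRing R] (x y : Fin 3 → R) : R := ∑ i, x i * y i

/-- The 2-cocycle `Ω_α` on `ℚ³ ⊕ ℚ³`. -/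
noncomputable def OmegaQ (α : ℝ) (g h : VV ℚ) : Circle :=
  Circle.exp (2 * Real.pi * α * ((dotR g.1 h.2 - dotR g.2 h.1 : ℚ) : ℝ))

/-- The extension `Ω̃_α` of `Ω_α` to `Γ = (ℚ³ ⊕ ℚ³) ⋊ SL(3,ℚ)`. -/
noncomputable def OmegaT (α : ℝ) (g h : GammaR ℚ) : Circle :=
  OmegaQ α (Multiplicative.toAdd g.left) (sl3Act g.right (Multiplicative.toAdd h.left))

/-!
Conjugating a transvection `1 + b E_{ij}` by the diagonal matrix with entries `2` at `i`,
`1/2` at `j` and `1` elsewhere multiplies `b` by `4`, so in any unitary representation the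
image `u` of a transvection is conjugate to `u ^ 4`. Then `μ ↦ μ ^ 4` permutes the (at most `n`)
eigenvalues of `u`, so `u ^ N = 1` for `N = 4 ^ n! - 1`, which does not depend on `b`. Since `b`
is divisible by `N` in `ℚ`, every transvection acts trivially, and transvections generate
`SL(3,ℚ)`. Finally `π` is trivial on `ℚ³ ⊕ ℚ³` as well: once `SL(3,ℚ)` acts trivially, `π(v)`
only depends on the `SL(3,ℚ)`-orbit of `v`, and a transvection sends `e_j` to `e_j + b e_i`.
-/

theorem Function.Surjective.iterate_factorial_eq_id {α : Type*} [Finite α] {f : α → α}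
    (hf : f.Surjective) {k : ℕ} (hk : Nat.card α ≤ k) : f^[k.factorial] = id := by
  classical
  have := Fintype.ofFinite α
  let e := Equiv.ofBijective f ⟨Finite.injective_iff_surjective.2 hf, hf⟩
  have he : e ^ k.factorial = 1 := by
    obtain ⟨q, hq⟩ : Fintype.card (Equiv.Perm α) ∣ k.factorial := by
      rw [Fintype.card_perm, ← Nat.card_eq_fintype_card]
      exact Nat.factorial_dvd_factorial hk
    rw [hq, pow_mul, pow_card_eq_one, one_pow]
  rw [← Equiv.Perm.coe_one, ← he, Equiv.Perm.coe_pow]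
  rfl

theorem Matrix.card_spectrum_le {ι K : Type*} [Fintype ι] [DecidableEq ι] [Field K]
    (A : Matrix ι ι K) : Nat.card (spectrum K A) ≤ Fintype.card ι := by
  classical
  have hsub : spectrum K A ⊆ A.charpoly.roots.toFinset := fun μ hμ => by
    rw [← spectrum_toLin', Module.End.mem_spectrum_iff_isRoot_charpoly, charpoly_toLin'] at hμ
    simpa [A.charpoly_monic.ne_zero] using hμ
  calc Nat.card (spectrum K A) ≤ A.charpoly.roots.toFinset.card := by
        simpa using Set.ncard_le_ncard hsub (Finset.finite_toSet _)
    _ ≤ A.charpoly.roots.card := Multiset.toFinset_card_le _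
    _ ≤ A.charpoly.natDegree := Polynomial.card_roots' _
    _ = Fintype.card ι := charpoly_natDegree_eq_dim A

open scoped Matrix.Norms.L2Operator in
theorem Matrix.UnitaryGroup.eq_one_of_spectrum_subset_one {ι : Type*} [Fintype ι] [DecidableEq ι]
    (u : unitaryGroup ι ℂ) (h : spectrum ℂ (u : Matrix ι ι ℂ) ⊆ {1}) : u = 1 :=
  Subtype.ext (CFC.eq_one_of_spectrum_subset_one _ h)

namespace Matrix.UnitaryGroup

variable {ι : Type*} [Fintype ι] [DecidableEq ι]

theorem image_pow_spectrum_of_conj_eq_pow {u c : unitaryGroup ι ℂ} {m : ℕ} (hm : 0 < m)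
    (h : c * u * c⁻¹ = u ^ m) :
    (· ^ m) '' spectrum ℂ (u : Matrix ι ι ℂ) = spectrum ℂ (u : Matrix ι ι ℂ) := by
  have hconj : (u : Matrix ι ι ℂ) ^ m = c * u * star (c : Matrix ι ι ℂ) := by
    rw [← SubmonoidClass.coe_pow, ← h]
    rfl
  rw [← spectrum.map_pow_of_pos _ hm, hconj, Unitary.spectrum_star_right_conjugate]

theorem pow_eq_one_of_conj_eq_pow {u c : unitaryGroup ι ℂ} {m : ℕ} (hm : 0 < m)
    (h : c * u * c⁻¹ = u ^ m) : u ^ (m ^ (Fintype.card ι).factorial - 1) = 1 := by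
  have hS := image_pow_spectrum_of_conj_eq_pow hm h
  have hmaps : Set.MapsTo (· ^ m) (spectrum ℂ (u : Matrix ι ι ℂ)) (spectrum ℂ _) :=
    fun μ hμ => hS ▸ Set.mem_image_of_mem _ hμ
  have hsurj : hmaps.restrict.Surjective := by
    rintro ⟨μ, hμ⟩
    rw [← hS] at hμ
    obtain ⟨ν, hν, rfl⟩ := hμ
    exact ⟨⟨ν, hν⟩, rfl⟩
  have hfix : ∀ μ ∈ spectrum ℂ (u : Matrix ι ι ℂ), μ ^ m ^ (Fintype.card ι).factorial = μ :=
    fun μ hμ => by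
      have := congrArg Subtype.val
        (congrFun (hsurj.iterate_factorial_eq_id (card_spectrum_le _)) ⟨μ, hμ⟩)
      simpa [Set.MapsTo.iterate_restrict, pow_iterate] using this
  rcases Nat.eq_zero_or_pos (m ^ (Fintype.card ι).factorial - 1) with hN | hN
  · rw [hN, pow_zero]
  apply eq_one_of_spectrum_subset_one
  rw [SubmonoidClass.coe_pow, spectrum.map_pow_of_pos _ hN]
  rintro _ ⟨μ, hμ, rfl⟩
  have hμ0 : μ ≠ 0 := fun h0 => spectrum.zero_notMem ℂ (Unitary.toUnits u).isUnit (h0 ▸ hμ)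
  refine mul_left_cancel₀ hμ0 ?_
  rw [← pow_succ', Nat.sub_add_cancel (by omega), hfix μ hμ, mul_one]

end Matrix.UnitaryGroup

theorem MonoidHom.eq_one_of_conj_eq_pow {ι K : Type*} [Fintype ι] [DecidableEq ι]
    [Field K] [CharZero K] (f : Multiplicative K →* unitaryGroup ι ℂ)
    {c : unitaryGroup ι ℂ} {m : ℕ} (hm : 2 ≤ m) (h : ∀ x, c * f x * c⁻¹ = f x ^ m) : f = 1 := by
  set N := m ^ (Fintype.card ι).factorial - 1
  have hN : (N : K) ≠ 0 := by
    have : 2 ≤ m ^ (Fintype.card ι).factorial :=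
      hm.trans (Nat.le_self_pow (Nat.factorial_ne_zero _) m)
    exact Nat.cast_ne_zero.2 (by omega)
  refine MonoidHom.ext fun x => ?_
  have hx : x = Multiplicative.ofAdd (x.toAdd / N) ^ N := by
    rw [← ofAdd_nsmul, nsmul_eq_mul, mul_div_cancel₀ _ hN, ofAdd_toAdd]
  rw [hx, map_pow, UnitaryGroup.pow_eq_one_of_conj_eq_pow (by omega) (h _), one_apply]

namespace Matrix.SpecialLinearGroup

variable {ι F : Type*} [Fintype ι] [DecidableEq ι]

def transvectionHom [CommRing F] {i j : ι} (hij : i ≠ j) :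
    Multiplicative F →* SpecialLinearGroup ι F where
  toFun b := transvection hij b.toAdd
  map_one' := transvection_coeff_zero hij
  map_mul' _ _ := transvection_add hij _ _

variable [Field F]

theorem diag2n_mul_transvection_mul_inv {i j : ι} (hij : i ≠ j) {a : F} (ha : a ≠ 0) (b : F) :
    diag2n hij a ha * transvection hij b * (diag2n hij a ha)⁻¹ = transvection hij (a ^ 2 * b) := by
  rw [mul_inv_eq_iff_eq_mul]
  ext k l
  simp only [coe_mul, diag2n_coe, transvection_coe, diagonal_mul, mul_diagonal, add_apply,
    one_apply, single_apply, mul_add, add_mul, mul_ite, ite_mul, mul_one, one_mul, mul_zero,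
    zero_mul]
  grind

theorem diag2n_eq_transvection_prod {i j : ι} (hij : i ≠ j) {a : F} (ha : a ≠ 0) :
    diag2n hij a ha = transvection hij a * transvection hij.symm (-a⁻¹) * transvection hij a *
      transvection hij (-1) * transvection hij.symm 1 * transvection hij (-1) := by
  ext k l
  simp only [coe_mul, diag2n_coe, transvection_coe, diagonal_apply, add_apply, one_apply,
    single_apply, mul_add, add_mul, mul_one, one_mul, mul_neg, neg_mul, neg_neg, add_zero,
    single_mul_single_same, single_mul_single_of_ne _ _ _ _ hij,
    single_mul_single_of_ne _ _ _ _ hij.symm, mul_inv_cancel₀ ha, inv_mul_cancel₀ ha]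
  grind

theorem monoidHom_unitaryGroup_eq_one [Nontrivial ι] [CharZero F] {κ : Type*} [Fintype κ]
    [DecidableEq κ] (ρ : SpecialLinearGroup ι F →* unitaryGroup κ ℂ) : ρ = 1 := by
  have htransvection {i j : ι} (hij : i ≠ j) (b : F) : ρ (transvection hij b) = 1 := by
    have hconj (x : Multiplicative F) :
        ρ (diag2n hij 2 two_ne_zero) * ρ (transvectionHom hij x) * (ρ (diag2n hij 2 two_ne_zero))⁻¹
          = ρ (transvectionHom hij x) ^ 4 := by
      rw [← map_inv, ← map_mul, ← map_mul, ← map_pow, ← map_pow]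
      norm_num [transvectionHom, diag2n_mul_transvection_mul_inv]
    exact DFunLike.congr_fun ((ρ.comp (transvectionHom hij)).eq_one_of_conj_eq_pow
      (by norm_num) hconj) (Multiplicative.ofAdd b)
  refine MonoidHom.ext fun A => diagonal_transvection_induction' (ρ · = 1) A
    (fun i j hij c hc => ?_) (fun i j hij b => htransvection hij b)
    (fun A B hA hB => by rw [map_mul, hA, hB, one_mul])
  rw [diag2n_eq_transvection_prod]
  simp only [map_mul, htransvection, mul_one]

end Matrix.SpecialLinearGroup

theorem SemidirectProduct.map_inl_aut {N G H : Type*} [Group N] [Group G] [Group H]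
    {φ : G →* MulAut N} (f : N ⋊[φ] G →* H) (hf : ∀ g, f (inr g) = 1) (g : G) (n : N) :
    f (inl (φ g n)) = f (inl n) := by
  rw [SemidirectProduct.inl_aut, map_mul, map_mul, hf, hf, one_mul, mul_one]

open Matrix.SpecialLinearGroup in
theorem transposeSL_transvection {R : Type*} [CommRing R] {i j : Fin 3} (hij : i ≠ j) (c : R) :
    transposeSL (transvection hij c) = transvection hij.symm c :=
  Subtype.ext (by simp [transposeSL, transvection_coe])

open Matrix.SpecialLinearGroup in
theorem dualHom_transvection {R : Type*} [CommRing R] {i j : Fin 3} (hij : i ≠ j) (c : R) :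
    dualHom (transvection hij c) = transvection hij.symm (-c) := by
  change (transposeSL _)⁻¹ = _
  rw [transposeSL_transvection, transvection_inv]

theorem sl3ActM_ofAdd {R : Type*} [CommRing R] (A : SpecialLinearGroup (Fin 3) R) (v : VV R) :
    sl3ActM R A (.ofAdd v) = .ofAdd (A • v.1, dualHom A • v.2) := rfl

namespace GammaR

open Matrix.SpecialLinearGroup SemidirectProduct

variable {R H : Type*} [CommRing R] [Group H]

theorem map_inl_add (f : GammaR R →* H) (v w : VV R) :
    f (inl (.ofAdd (v + w))) = f (inl (.ofAdd v)) * f (inl (.ofAdd w)) := by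
  rw [ofAdd_add, map_mul, map_mul]

theorem map_inl_single_fst (f : GammaR R →* H) (hf : ∀ A, f (inr A) = 1) (i : Fin 3) (c : R) :
    f (inl (.ofAdd (Pi.single i c, 0))) = 1 := by
  obtain ⟨j, hij⟩ := exists_ne i
  have h := map_inl_aut f hf (transvection hij.symm c) (.ofAdd (Pi.single j 1, 0))
  rwa [sl3ActM_ofAdd, transvection_smul_single_snd, smul_zero,
    show ((Pi.single j 1 + c • Pi.single i 1, 0) : VV R) = (Pi.single j 1, 0) + (Pi.single i c, 0)
      by simp [← Pi.single_smul'], map_inl_add, mul_eq_left] at h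

theorem map_inl_single_snd (f : GammaR R →* H) (hf : ∀ A, f (inr A) = 1) (i : Fin 3) (c : R) :
    f (inl (.ofAdd (0, Pi.single i c))) = 1 := by
  obtain ⟨j, hij⟩ := exists_ne i
  have h := map_inl_aut f hf (transvection hij (-c)) (.ofAdd (0, Pi.single j 1))
  rwa [sl3ActM_ofAdd, dualHom_transvection, neg_neg, transvection_smul_single_snd, smul_zero,
    show ((0, Pi.single j 1 + c • Pi.single i 1) : VV R) = (0, Pi.single j 1) + (0, Pi.single i c)
      by simp [← Pi.single_smul'], map_inl_add, mul_eq_left] at h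

theorem map_inl_eq_one (f : GammaR R →* H) (hf : ∀ A, f (inr A) = 1) (v : VV R) :
    f (inl (.ofAdd v)) = 1 := by
  have hsum (s : Fin 3 → VV R) (hs : ∀ i, f (inl (.ofAdd (s i))) = 1) :
      f (inl (.ofAdd (∑ i, s i))) = 1 :=
    Finset.sum_induction _ (fun v => f (inl (.ofAdd v)) = 1)
      (fun v w hv hw => by rw [map_inl_add, hv, hw, one_mul]) (by simp) (fun i _ => hs i)
  obtain ⟨x, y⟩ := v
  have hdecomp : ((x, y) : VV R) =
      ∑ i, ((Pi.single i (x i), 0) : VV R) + ∑ i, ((0, Pi.single i (y i)) : VV R) := by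
    ext k <;> simp [Prod.fst_sum, Prod.snd_sum, Finset.univ_sum_single]
  rw [hdecomp, map_inl_add, hsum _ fun i => map_inl_single_fst f hf i (x i),
    hsum _ fun i => map_inl_single_snd f hf i (y i), one_mul]

end GammaR

/-- `Γ = (ℚ³ ⊕ ℚ³) ⋊ SL(3,ℚ)` has no non-trivial finite dimensional unitary
representations: every homomorphism `Γ →* U(n)` is trivial. -/
theorem no_nontrivial_findim_unitary_rep (n : ℕ)
    (π : GammaR ℚ →* Matrix.unitaryGroup (Fin n) ℂ) (g : GammaR ℚ) :
    π g = 1 := by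
  have hinr (A : SpecialLinearGroup (Fin 3) ℚ) : π (SemidirectProduct.inr A) = 1 :=
    DFunLike.congr_fun
      (SpecialLinearGroup.monoidHom_unitaryGroup_eq_one (π.comp SemidirectProduct.inr)) A
  rw [← SemidirectProduct.inl_left_mul_inr_right g, map_mul, hinr, mul_one,
    ← ofAdd_toAdd g.left, GammaR.map_inl_eq_one π hinr]
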